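/- For every i ∈ {1,...,n} with SA[i] > 1, it holds that SA^{-1}[SA[i]−1] = C(BWT[i]) + rank_{BWT[i]}(i); that is, the last-to-first mapping LF(i) equals the number of text positions holding a character smaller than BWT[i], plus the number of occurrences of BWT[i] in BWT[1..i]. -/

import Mathlib

variable {α : Type*} [LinearOrder α]

/-- The suffix `T[p..n]` of a 1-indexed string `T[1..n]`, as a list. -/
def sfx (T : ℕ → α) (n p : ℕ) : List α :=
  (List.range (n + 1 - p)).map (fun d => T (p + d))

/-- The Burrows–Wheeler transform determined by the text `T`, its suffix array `SA`,
and the end-of-string character `dollar`:  `BWT[i] = T[SA[i]-1]` if `SA[i] > 1`,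
and `BWT[i] = $` if `SA[i] = 1`. -/
def bwt (T : ℕ → α) (SA : ℕ → ℕ) (dollar : α) (i : ℕ) : α :=
  if SA i = 1 then dollar else T (SA i - 1)

/-!
The rank `ISA[P]` of the suffix `T[P..n]`, `P = SA[i] - 1`, is the number of suffixes `≤ T[P..n]`.
Comparing first characters, these are the `C(c)` suffixes starting with a character below
`c = T[P] = BWT[i]`, and the `T[p..n]` with `T[p] = c` and `T[p+1..n] ≤ T[SA[i]..n]`. Shifting
`p ↦ p + 1` and reindexing by `SA`, the latter are the `q ≤ i` with `BWT[q] = c`; since `c ≠ $`,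
no such `p` is `n`, so the shift stays inside `{1,...,n}`.
-/

open Finset

section Permutation

variable {β : Type*} [LinearOrder β]

lemma filter_apply_le_eq_Icc {n i : ℕ} {g : ℕ → β} (hg : StrictMonoOn g (Set.Icc 1 n))
    (hi : i ∈ Set.Icc 1 n) : {q ∈ Icc 1 n | g q ≤ g i} = Icc 1 i := by
  ext q
  simp only [mem_filter, mem_Icc]
  constructor
  · rintro ⟨hq, hle⟩
    exact ⟨hq.1, (hg.le_iff_le hq hi).1 hle⟩
  · rintro ⟨hq1, hqi⟩
    have hq : q ∈ Set.Icc 1 n := ⟨hq1, hqi.trans hi.2⟩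
    exact ⟨hq, (hg.le_iff_le hq hi).2 hqi⟩

lemma card_filter_comp_eq {n : ℕ} {SA ISA : ℕ → ℕ} (Q : ℕ → Prop) [DecidablePred Q]
    (hSAran : ∀ i, 1 ≤ i → i ≤ n → 1 ≤ SA i ∧ SA i ≤ n)
    (hISA : ∀ i, 1 ≤ i → i ≤ n → ISA (SA i) = i)
    (hISAran : ∀ p, 1 ≤ p → p ≤ n → 1 ≤ ISA p ∧ ISA p ≤ n ∧ SA (ISA p) = p) :
    #{q ∈ Icc 1 n | Q (SA q)} = #{p ∈ Icc 1 n | Q p} := by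
  refine card_nbij' SA ISA ?_ ?_ ?_ ?_
  · intro q hq
    simp only [mem_coe, mem_filter, mem_Icc] at hq ⊢
    exact ⟨hSAran q hq.1.1 hq.1.2, hq.2⟩
  · intro p hp
    simp only [mem_coe, mem_filter, mem_Icc] at hp ⊢
    obtain ⟨h1, hn, hinv⟩ := hISAran p hp.1.1 hp.1.2
    exact ⟨⟨h1, hn⟩, by rw [hinv]; exact hp.2⟩
  · intro q hq
    simp only [mem_coe, mem_filter, mem_Icc] at hq
    exact hISA q hq.1.1 hq.1.2
  · intro p hp
    simp only [mem_coe, mem_filter, mem_Icc] at hp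
    exact (hISAran p hp.1.1 hp.1.2).2.2

lemma inv_apply_eq_card_filter_le {n p : ℕ} {SA ISA : ℕ → ℕ} {f : ℕ → β}
    (hsorted : StrictMonoOn (fun q => f (SA q)) (Set.Icc 1 n))
    (hSAran : ∀ i, 1 ≤ i → i ≤ n → 1 ≤ SA i ∧ SA i ≤ n)
    (hISA : ∀ i, 1 ≤ i → i ≤ n → ISA (SA i) = i)
    (hISAran : ∀ p, 1 ≤ p → p ≤ n → 1 ≤ ISA p ∧ ISA p ≤ n ∧ SA (ISA p) = p)
    (hp : p ∈ Set.Icc 1 n) :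
    ISA p = #{p' ∈ Icc 1 n | f p' ≤ f p} := by
  obtain ⟨h1, hn, hinv⟩ := hISAran p hp.1 hp.2
  rw [← card_filter_comp_eq (f · ≤ f p) hSAran hISA hISAran]
  conv_rhs => rw [← hinv]
  rw [filter_apply_le_eq_Icc hsorted ⟨h1, hn⟩, Nat.card_Icc, Nat.add_sub_cancel]

end Permutation

lemma sfx_eq_cons {β : Type*} (T : ℕ → β) {n p : ℕ} (hp : p ≤ n) :
    sfx T n p = T p :: sfx T n (p + 1) := by
  have hlen : n + 1 - p = (n - p) + 1 := by omega
  rw [sfx, sfx, hlen, List.range_succ_eq_map, List.map_cons, List.map_map, Nat.add_zero,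
    Nat.add_sub_add_right]
  congr 1
  exact List.map_congr_left fun d _ => congrArg T (by omega)

lemma sfx_le_sfx_iff (T : ℕ → α) {n p P : ℕ} (hp : p ≤ n) (hP : P ≤ n) :
    sfx T n p ≤ sfx T n P ↔
      T p < T P ∨ T p = T P ∧ sfx T n (p + 1) ≤ sfx T n (P + 1) := by
  rw [sfx_eq_cons T hp, sfx_eq_cons T hP, le_iff_lt_or_eq, le_iff_lt_or_eq, List.cons.injEq,
    List.cons_lt_cons_iff (α := α)]
  tauto

lemma card_filter_sfx_le (T : ℕ → α) {n P : ℕ} (hP : P ≤ n) :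
    #{p ∈ Icc 1 n | sfx T n p ≤ sfx T n P} =
      #{p ∈ Icc 1 n | T p < T P} +
        #{p ∈ Icc 1 n | T p = T P ∧ sfx T n (p + 1) ≤ sfx T n (P + 1)} := by
  rw [← card_union_of_disjoint, ← filter_or]
  · exact congrArg card <| filter_congr fun p hp => sfx_le_sfx_iff T (mem_Icc.1 hp).2 hP
  · exact disjoint_filter.2 fun p _ hlt heq => hlt.ne heq.1

def charBefore (T : ℕ → α) (dollar : α) (p : ℕ) : α :=
  if p = 1 then dollar else T (p - 1)

lemma card_filter_succ_eq {T : ℕ → α} {n : ℕ} {dollar c : α} (Q : ℕ → Prop) [DecidablePred Q]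
    (hTn : T n = dollar) (hc : c ≠ dollar) :
    #{p ∈ Icc 1 n | T p = c ∧ Q (p + 1)} = #{p ∈ Icc 1 n | Q p ∧ charBefore T dollar p = c} := by
  have hne : ∀ p, charBefore T dollar p = c → p ≠ 1 := by
    rintro p hbefore rfl
    exact hc (hbefore.symm.trans (if_pos rfl))
  have hlt : ∀ p ≤ n, T p = c → p < n := by
    rintro p hp hTp
    exact hp.lt_of_ne (by rintro rfl; exact hc (hTp ▸ hTn))
  refine card_nbij' (· + 1) (· - 1) ?_ ?_ ?_ ?_ <;> intro p hp <;>
    simp only [mem_coe, mem_filter, mem_Icc] at hp ⊢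
  · obtain ⟨⟨hp1, hpn⟩, hTp, hQ⟩ := hp
    have := hlt p hpn hTp
    refine ⟨⟨by omega, by omega⟩, hQ, ?_⟩
    rwa [charBefore, if_neg (by omega), Nat.add_sub_cancel]
  · obtain ⟨⟨hp1, hpn⟩, hQ, hbefore⟩ := hp
    have := hne p hbefore
    rw [charBefore, if_neg this] at hbefore
    refine ⟨⟨by omega, by omega⟩, hbefore, ?_⟩
    rwa [Nat.sub_add_cancel (by omega)]
  · omega
  · have := hne p hp.2.2
    omega

theorem statement10_general
    (n : ℕ) (T : ℕ → α) (dollar : α) (SA : ℕ → ℕ)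
    -- `T[1..n]` is a string of length `n ≥ 1` ending with `$`,
    -- which is smaller than every other character and occurs only at position `n`
    (hTn : T n = dollar)
    (hdollar : ∀ p, 1 ≤ p → p < n → dollar < T p)
    -- `SA` is a permutation of `{1,...,n}` sorting the suffixes lexicographically
    (hSAran : ∀ i, 1 ≤ i → i ≤ n → 1 ≤ SA i ∧ SA i ≤ n)
    (hSAmono : ∀ i j, 1 ≤ i → i < j → j ≤ n → sfx T n (SA i) < sfx T n (SA j))
    -- `ISA` is the inverse permutation of `SA`
    (ISA : ℕ → ℕ)
    (hISA : ∀ i, 1 ≤ i → i ≤ n → ISA (SA i) = i)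
    (hISAran : ∀ p, 1 ≤ p → p ≤ n → 1 ≤ ISA p ∧ ISA p ≤ n ∧ SA (ISA p) = p)
    : ∀ i, 1 ≤ i → i ≤ n → 1 < SA i →
      ISA (SA i - 1) =
        ((Finset.Icc 1 n).filter (fun p => T p < bwt T SA dollar i)).card +
        ((Finset.Icc 1 i).filter (fun p => bwt T SA dollar p = bwt T SA dollar i)).card := by
  intro i hi1 hin hSAi
  have hsorted : StrictMonoOn (fun q => sfx T n (SA q)) (Set.Icc 1 n) :=
    fun a ha b hb hab => hSAmono a b ha.1 hab hb.2
  have hSAin := hSAran i hi1 hin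
  have hc : bwt T SA dollar i = T (SA i - 1) := if_neg (by omega)
  have hcd : bwt T SA dollar i ≠ dollar := hc ▸ (hdollar _ (by omega) (by omega)).ne'
  rw [inv_apply_eq_card_filter_le hsorted hSAran hISA hISAran ⟨by omega, by omega⟩,
    card_filter_sfx_le T (by omega), Nat.sub_add_cancel hSAi.le, ← hc,
    card_filter_succ_eq (sfx T n · ≤ sfx T n (SA i)) hTn hcd]
  congr 1
  rw [← card_filter_comp_eq _ hSAran hISA hISAran, ← filter_filter,
    filter_apply_le_eq_Icc hsorted ⟨hi1, hin⟩]
  rfl -- `bwt T SA dollar q` unfolds to `charBefore T dollar (SA q)`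

/-- For every `i` with `SA[i] > 1`,
`LF(i) = ISA[SA[i]-1] = C(BWT[i]) + rank_{BWT[i]}(i)`, where `C(c)` is the number of
text positions holding a character smaller than `c` and `rank_c(i)` is the number of
occurrences of `c` in `BWT[1..i]`. -/
theorem statement10
    (n : ℕ) (T : ℕ → α) (dollar : α) (SA : ℕ → ℕ)
    -- `T[1..n]` is a string of length `n ≥ 1` ending with `$`,
    -- which is smaller than every other character and occurs only at position `n`
    (hn : 1 ≤ n) (hTn : T n = dollar)
    (hdollar : ∀ p, 1 ≤ p → p < n → dollar < T p)
    -- `SA` is a permutation of `{1,...,n}` sorting the suffixes lexicographically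
    (hSAran : ∀ i, 1 ≤ i → i ≤ n → 1 ≤ SA i ∧ SA i ≤ n)
    (hSAsurj : ∀ p, 1 ≤ p → p ≤ n → ∃ i, 1 ≤ i ∧ i ≤ n ∧ SA i = p)
    (hSAmono : ∀ i j, 1 ≤ i → i < j → j ≤ n → sfx T n (SA i) < sfx T n (SA j))
    -- `ISA` is the inverse permutation of `SA`
    (ISA : ℕ → ℕ)
    (hISA : ∀ i, 1 ≤ i → i ≤ n → ISA (SA i) = i)
    (hISAran : ∀ p, 1 ≤ p → p ≤ n → 1 ≤ ISA p ∧ ISA p ≤ n ∧ SA (ISA p) = p)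
    : ∀ i, 1 ≤ i → i ≤ n → 1 < SA i →
      ISA (SA i - 1) =
        ((Finset.Icc 1 n).filter (fun p => T p < bwt T SA dollar i)).card +
        ((Finset.Icc 1 i).filter (fun p => bwt T SA dollar p = bwt T SA dollar i)).card :=
  statement10_general n T dollar SA hTn hdollar hSAran hSAmono ISA hISA hISAran
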